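/- arXiv:2412.08667 — 3 statements merged into one kernel-verified Lean document; each statement's English description precedes it below -/
import Mathlib

section
/- Let U ⊆ ℂ be open and connected, let f : ℂ → ℂ be analytic on U and not identically zero on U (i.e., there exists w ∈ U with f(w) ≠ 0), let K ⊆ ℂ be a compact set well contained in U, and let ε > 0. Then either there exists δ > 0 with |f(z)| ≥ δ for all z ∈ K, or there exist finitely many points z₁, …, zₙ ∈ U and a function g analytic on U such that f(z) = (z − z₁)(z − z₂)⋯(z − zₙ)·g(z) for all z ∈ U, there exists δ > 0 with |g(z)| ≥ δ for all z ∈ K, and dist(zᵢ, K) < ε for each i. -/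
/-!
The zeros of `f` in `K` are isolated in the compact set `K`, hence finitely many. Each of them
is divided out with its multiplicity by iterating `dslope`, which keeps the quotient analytic on
all of `U` and leaves it nonvanishing at that point. The final quotient `g` has no zeros on `K`,
so `‖g‖` has a positive minimum there, and the extracted zeros lie in `K`, at distance `0 < ε`.
-/

open Complex Metric Filter Function Topology

variable {𝕜 : Type*} [NontriviallyNormedField 𝕜] {E : Type*} [NormedAddCommGroup E]
  [NormedSpace 𝕜 E] {f : 𝕜 → E} {U : Set 𝕜}

theorem analyticAt_dslope {a b : 𝕜} (hf : AnalyticAt 𝕜 f b) : AnalyticAt 𝕜 (dslope f a) b := by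
  rcases eq_or_ne b a with rfl | hba
  · obtain ⟨p, hp⟩ := hf
    exact hp.has_fpower_series_dslope_fslope.analyticAt
  · refine AnalyticAt.congr ?_ (dslope_eventuallyEq_slope_of_ne f hba).symm
    rw [show slope f a = fun z => (z - a)⁻¹ • (f z - f a) from funext (slope_def_module f a)]
    exact ((analyticAt_id.sub analyticAt_const).inv (sub_ne_zero.mpr hba)).smul
      (hf.sub analyticAt_const)

theorem AnalyticOnNhd.iterate_dslope (hf : AnalyticOnNhd 𝕜 f U) (a : 𝕜) (n : ℕ) :
    AnalyticOnNhd 𝕜 ((swap dslope a)^[n] f) U := by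
  induction n with
  | zero => exact hf
  | succ n ih =>
    rw [iterate_succ_apply']
    exact fun z hz => analyticAt_dslope (ih z hz)

theorem AnalyticAt.exists_eq_pow_smul_iterate_dslope {a : 𝕜} (hf : AnalyticAt 𝕜 f a)
    (hne : ¬∀ᶠ z in 𝓝 a, f z = 0) :
    ∃ n, (swap dslope a)^[n] f a ≠ 0 ∧ ∀ z, f z = (z - a) ^ n • (swap dslope a)^[n] f z := by
  obtain ⟨p, hp⟩ := hf
  exact ⟨p.order, hp.iterate_dslope_fslope_ne_zero (mt hp.locally_zero_iff.mpr hne),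
    hp.eq_pow_order_mul_iterate_dslope⟩

theorem AnalyticOnNhd.exists_eq_pow_smul_of_ne_zero (hf : AnalyticOnNhd 𝕜 f U)
    (hU : IsPreconnected U) (hne : ∃ w ∈ U, f w ≠ 0) {a : 𝕜} (ha : a ∈ U) :
    ∃ (n : ℕ) (g : 𝕜 → E), AnalyticOnNhd 𝕜 g U ∧ g a ≠ 0 ∧ ∀ z, f z = (z - a) ^ n • g z := by
  obtain ⟨w, hwU, hfw⟩ := hne
  have hloc : ¬∀ᶠ z in 𝓝 a, f z = 0 := fun h =>
    hfw (hf.eqOn_zero_of_preconnected_of_eventuallyEq_zero hU ha h hwU)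
  obtain ⟨n, hn, hfn⟩ := (hf a ha).exists_eq_pow_smul_iterate_dslope hloc
  exact ⟨n, _, hf.iterate_dslope a n, hn, hfn⟩

theorem AnalyticOnNhd.exists_eq_prod_smul_of_finset (hf : AnalyticOnNhd 𝕜 f U)
    (hU : IsPreconnected U) (hne : ∃ w ∈ U, f w ≠ 0) (S : Finset 𝕜) (hSU : ↑S ⊆ U) :
    ∃ zs : List 𝕜, (∀ z ∈ zs, z ∈ S) ∧ ∃ g : 𝕜 → E, AnalyticOnNhd 𝕜 g U ∧
      (∀ z ∈ S, g z ≠ 0) ∧ ∀ w, f w = (zs.map (w - ·)).prod • g w := by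
  classical
  induction S using Finset.induction_on generalizing f with
  | empty => exact ⟨[], by simp, f, hf, by simp, by simp⟩
  | insert a S _ ih =>
    rw [Finset.coe_insert, Set.insert_subset_iff] at hSU
    obtain ⟨n, g, hg, hga, hfg⟩ := hf.exists_eq_pow_smul_of_ne_zero hU hne hSU.1
    obtain ⟨zs, hzs, h, hh, hhS, hgh⟩ := ih hg ⟨a, hSU.1, hga⟩ hSU.2
    refine ⟨List.replicate n a ++ zs, ?_, h, hh, ?_, fun w => ?_⟩
    · simp only [List.mem_append, List.mem_replicate, Finset.mem_insert]
      rintro z (⟨-, rfl⟩ | hz)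
      exacts [Or.inl rfl, Or.inr (hzs z hz)]
    · refine Finset.forall_mem_insert _ _ _ |>.mpr ⟨fun ha0 => hga ?_, hhS⟩
      rw [hgh, ha0, smul_zero]
    · rw [hfg, hgh, smul_smul, List.map_append, List.prod_append, List.map_replicate,
        List.prod_replicate]

theorem AnalyticOnNhd.finite_zeros_of_isCompact (hf : AnalyticOnNhd 𝕜 f U)
    (hU : IsPreconnected U) (hne : ∃ w ∈ U, f w ≠ 0) {K : Set 𝕜} (hK : IsCompact K)
    (hKU : K ⊆ U) : {z ∈ K | f z = 0}.Finite := by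
  obtain ⟨w, hwU, hfw⟩ := hne
  have hcod : {z | f z ≠ 0} ∈ codiscreteWithin K := codiscreteWithin_mono hKU <|
    (hf.eqOn_zero_or_eventually_ne_zero_of_preconnected hU).resolve_left fun h => hfw (h hwU)
  exact (hK.finite_sdiff_of_mem_codiscreteWithin hcod).subset
    fun z hz => ⟨hz.1, not_not_intro hz.2⟩

theorem bridges_zero_factorization
    (U : Set ℂ) (hU : IsOpen U) (hUc : IsConnected U)
    (f : ℂ → ℂ) (hf : AnalyticOn ℂ f U) (hne : ∃ w ∈ U, f w ≠ 0)
    (K : Set ℂ) (hK : IsCompact K)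
    (hKU : ∃ r > 0, {z : ℂ | Metric.infDist z K ≤ r} ⊆ U)
    (ε : ℝ) (hε : 0 < ε) :
    (∃ δ > 0, ∀ z ∈ K, δ ≤ ‖f z‖) ∨
      ∃ (n : ℕ) (z : Fin n → ℂ) (g : ℂ → ℂ),
        (∀ i, z i ∈ U) ∧ AnalyticOn ℂ g U ∧
        (∀ w ∈ U, f w = (∏ i, (w - z i)) * g w) ∧
        (∃ δ > 0, ∀ w ∈ K, δ ≤ ‖g w‖) ∧
        (∀ i, Metric.infDist (z i) K < ε) := by
  obtain ⟨r, hr, hrU⟩ := hKU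
  have hKU : K ⊆ U := fun z hz => hrU (by simpa [infDist_zero_of_mem hz] using hr.le)
  replace hf := hU.analyticOn_iff_analyticOnNhd.mp hf
  have hZ := hf.finite_zeros_of_isCompact hUc.isPreconnected hne hK hKU
  obtain ⟨zs, hzs, g, hg, hgZ, hfg⟩ := hf.exists_eq_prod_smul_of_finset hUc.isPreconnected hne
    hZ.toFinset fun z hz => hKU (hZ.mem_toFinset.mp hz).1
  have hzsK : ∀ z ∈ zs, z ∈ K := fun z hz => (hZ.mem_toFinset.mp (hzs z hz)).1
  have hgK : ∀ w ∈ K, 0 < ‖g w‖ := fun w hw => norm_pos_iff.mpr fun hg0 => by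
    by_cases hfw : f w = 0
    · exact hgZ w (hZ.mem_toFinset.mpr ⟨hw, hfw⟩) hg0
    · exact hfw (by rw [hfg, hg0, smul_zero])
  obtain ⟨δ, hδ, hgδ⟩ := hK.exists_forall_le' (hg.continuousOn.mono hKU).norm hgK
  right
  refine ⟨zs.length, fun i => zs[i], g, fun i => hKU (hzsK _ (List.getElem_mem _)),
    hg.analyticOn, fun w _ => ?_, ⟨δ, hδ, hgδ⟩,
    fun i => (infDist_zero_of_mem (hzsK _ (List.getElem_mem _))).trans_lt hε⟩
  rw [hfg, smul_eq_mul, ← Fin.prod_univ_fun_getElem]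
  rfl
end

section
/- For every real θ with π/2 < θ < π, setting z = e^{iθ}, one has log(−z/(i·z + 1)) + log((i·z)/(i·z + 1)) + log(1 − sin θ) = −ln 2 + i(θ − π), where log is the principal branch of the complex logarithm, sin is the real sine function, and ln 2 is the real natural logarithm of 2. -/
open Complex Real

theorem log_sum_eq_case_I (θ : ℝ) (h1 : Real.pi / 2 < θ) (h2 : θ < Real.pi) :
    Complex.log (-Complex.exp (Complex.I * θ) /
        (Complex.I * Complex.exp (Complex.I * θ) + 1)) +
      Complex.log (Complex.I * Complex.exp (Complex.I * θ) /
        (Complex.I * Complex.exp (Complex.I * θ) + 1)) +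
      Complex.log ((1 - Real.sin θ : ℝ) : ℂ) =
      -(Real.log 2 : ℂ) + Complex.I * (θ - Real.pi) := by
  have hpi := Real.pi_pos
  set φ : ℝ := θ / 2 + Real.pi / 4 with hφ
  have hcosneg : Real.cos φ < 0 := by
    apply Real.cos_neg_of_pi_div_two_lt_of_lt <;> [nlinarith; nlinarith]
  set R : ℝ := -2 * Real.cos φ with hRdef
  have hR : 0 < R := by simp only [hRdef]; nlinarith
  have hRne : (R : ℂ) ≠ 0 := by exact_mod_cast hR.ne'
  -- exp(β I) = - exp(φ I) where β = θ/2 - 3π/4 = φ - π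
  have e1 : Complex.exp ((θ / 2 - 3 * Real.pi / 4 : ℝ) * Complex.I)
      = -Complex.exp ((φ : ℝ) * Complex.I) := by
    have h : ((θ / 2 - 3 * Real.pi / 4 : ℝ) : ℂ) * Complex.I
        = (φ : ℝ) * Complex.I + (-(Real.pi : ℂ)) * Complex.I := by
      push_cast [hφ]; ring
    rw [h, Complex.exp_add]
    have : Complex.exp (-(Real.pi : ℂ) * Complex.I) = -1 := by
      rw [show (-(Real.pi : ℂ)) * Complex.I = -(Real.pi * Complex.I) by ring,
        Complex.exp_neg, Complex.exp_pi_mul_I]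
      norm_num
    rw [this]; ring
  -- core identity:  I e^{iθ} + 1 = R e^{iβ}
  have hw : Complex.I * Complex.exp (Complex.I * θ) + 1
      = (R : ℂ) * Complex.exp ((θ / 2 - 3 * Real.pi / 4 : ℝ) * Complex.I) := by
    rw [e1]
    have hcos : (R : ℂ) = -(Complex.exp ((φ : ℝ) * Complex.I)
        + Complex.exp (-((φ : ℝ) * Complex.I))) := by
      have h2c := Complex.two_cos ((φ : ℝ) : ℂ)
      push_cast [hRdef]
      ring_nf at h2c ⊢
      linear_combination -h2c
    rw [hcos]
    have h2e : Complex.exp ((φ : ℝ) * Complex.I) * Complex.exp ((φ : ℝ) * Complex.I)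
        = Complex.I * Complex.exp (Complex.I * θ) := by
      rw [← Complex.exp_add]
      have : ((φ : ℝ) : ℂ) * Complex.I + ((φ : ℝ) : ℂ) * Complex.I
          = Complex.I * θ + (Real.pi / 2 : ℝ) * Complex.I := by push_cast [hφ]; ring
      rw [this, Complex.exp_add]
      have : Complex.exp ((Real.pi / 2 : ℝ) * Complex.I) = Complex.I := by
        rw [Complex.exp_mul_I]; push_cast; simp
      rw [this]; ring
    have hmul : Complex.exp ((φ : ℝ) * Complex.I) * Complex.exp (-((φ : ℝ) * Complex.I)) = 1 := by
      rw [← Complex.exp_add]; simp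
    calc Complex.I * Complex.exp (Complex.I * θ) + 1
        = Complex.exp ((φ : ℝ) * Complex.I) * Complex.exp ((φ : ℝ) * Complex.I)
          + Complex.exp ((φ : ℝ) * Complex.I) * Complex.exp (-((φ : ℝ) * Complex.I)) := by
          rw [h2e, hmul]
      _ = -(Complex.exp ((φ:ℝ) * Complex.I) + Complex.exp (-((φ:ℝ) * Complex.I)))
          * -Complex.exp ((φ:ℝ) * Complex.I) := by ring
  have hexppi : Complex.exp (-(Real.pi : ℂ) * Complex.I) = -1 := by
    rw [show (-(Real.pi : ℂ)) * Complex.I = -(Real.pi * Complex.I) by ring,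
      Complex.exp_neg, Complex.exp_pi_mul_I]
    norm_num
  have hexpI : Complex.exp ((Real.pi / 2 : ℝ) * Complex.I) = Complex.I := by
    rw [Complex.exp_mul_I]; push_cast; simp
  have hexp2pi : Complex.exp ((-(2 * Real.pi) : ℝ) * Complex.I) = 1 := by
    push_cast
    rw [show (-(2 * (Real.pi : ℂ))) * Complex.I = -(2 * Real.pi * Complex.I) by ring,
      Complex.exp_neg]
    rw [show (2 : ℂ) * Real.pi * Complex.I = 2 * Real.pi * Complex.I by ring]
    rw [Complex.exp_two_pi_mul_I]; norm_num
  have hdne : ((R : ℂ) * Complex.exp ((θ / 2 - 3 * Real.pi / 4 : ℝ) * Complex.I)) ≠ 0 :=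
    mul_ne_zero hRne (Complex.exp_ne_zero _)
  have hRinv : Complex.exp ((-Real.log R : ℝ) : ℂ) = ((R : ℂ))⁻¹ := by
    rw [← Complex.ofReal_exp, Real.exp_neg, Real.exp_log hR]; push_cast; ring
  have key1 : Complex.exp ((θ / 2 - Real.pi / 4 : ℝ) * Complex.I)
      * Complex.exp ((θ / 2 - 3 * Real.pi / 4 : ℝ) * Complex.I)
      = -Complex.exp (Complex.I * θ) := by
    rw [← Complex.exp_add]
    have h : ((θ / 2 - Real.pi / 4 : ℝ) : ℂ) * Complex.I
        + ((θ / 2 - 3 * Real.pi / 4 : ℝ) : ℂ) * Complex.I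
        = Complex.I * θ + (-(Real.pi : ℂ)) * Complex.I := by push_cast; ring
    rw [h, Complex.exp_add, hexppi]; ring
  have key2 : Complex.exp ((θ / 2 - 3 * Real.pi / 4 : ℝ) * Complex.I)
      * Complex.exp ((θ / 2 - 3 * Real.pi / 4 : ℝ) * Complex.I)
      = Complex.I * Complex.exp (Complex.I * θ) := by
    rw [← Complex.exp_add]
    have h : ((θ / 2 - 3 * Real.pi / 4 : ℝ) : ℂ) * Complex.I
        + ((θ / 2 - 3 * Real.pi / 4 : ℝ) : ℂ) * Complex.I
        = Complex.I * θ + ((Real.pi / 2 : ℝ) : ℂ) * Complex.I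
          + ((-(2 * Real.pi) : ℝ) : ℂ) * Complex.I := by push_cast; ring
    rw [h, Complex.exp_add, Complex.exp_add, hexpI, hexp2pi]; ring
  have ht1 : -Complex.exp (Complex.I * θ) / (Complex.I * Complex.exp (Complex.I * θ) + 1)
      = Complex.exp (((-Real.log R : ℝ) : ℂ) + ((θ / 2 - Real.pi / 4 : ℝ) : ℂ) * Complex.I) := by
    rw [hw, div_eq_iff hdne, Complex.exp_add, hRinv, ← key1]
    field_simp
  have ht2 : Complex.I * Complex.exp (Complex.I * θ) / (Complex.I * Complex.exp (Complex.I * θ) + 1)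
      = Complex.exp (((-Real.log R : ℝ) : ℂ) + ((θ / 2 - 3 * Real.pi / 4 : ℝ) : ℂ) * Complex.I) := by
    rw [hw, div_eq_iff hdne, Complex.exp_add, hRinv, ← key2]
    field_simp
  have L1 : Complex.log (-Complex.exp (Complex.I * θ)
      / (Complex.I * Complex.exp (Complex.I * θ) + 1))
      = ((-Real.log R : ℝ) : ℂ) + ((θ / 2 - Real.pi / 4 : ℝ) : ℂ) * Complex.I := by
    rw [ht1]
    exact Complex.log_exp (by simp; nlinarith) (by simp; nlinarith)
  have L2 : Complex.log (Complex.I * Complex.exp (Complex.I * θ)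
      / (Complex.I * Complex.exp (Complex.I * θ) + 1))
      = ((-Real.log R : ℝ) : ℂ) + ((θ / 2 - 3 * Real.pi / 4 : ℝ) : ℂ) * Complex.I := by
    rw [ht2]
    exact Complex.log_exp (by simp; nlinarith) (by simp; nlinarith)
  have hsin : 1 - Real.sin θ = R ^ 2 / 2 := by
    have hc := Real.cos_sq φ
    have h2φ : Real.cos (2 * φ) = -Real.sin θ := by
      rw [show 2 * φ = θ + Real.pi / 2 by rw [hφ]; ring, Real.cos_add_pi_div_two]
    rw [hRdef]; nlinarith [hc, h2φ]
  have hlog3 : Real.log (1 - Real.sin θ) = 2 * Real.log R - Real.log 2 := by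
    rw [hsin, Real.log_div (by positivity) (by norm_num), Real.log_pow]
    push_cast; ring
  have L3 : Complex.log ((1 - Real.sin θ : ℝ) : ℂ)
      = ((2 * Real.log R - Real.log 2 : ℝ) : ℂ) := by
    rw [← hlog3]
    exact (Complex.ofReal_log (by nlinarith [Real.sin_le_one θ])).symm
  rw [L1, L2, L3]
  push_cast
  ring
end

section
/- For every real θ with −π < θ < −π/2, setting z = e^{iθ}, one has log(−z/(i·z + 1)) + log((i·z)/(i·z + 1)) + log(1 − sin θ) = −ln 2 + i(θ + π), where log is the principal branch of the complex logarithm, sin is the real sine function, and ln 2 is the real natural logarithm of 2. -/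
open Complex Real

theorem log_sum_eq_case_II (θ : ℝ) (h1 : -Real.pi < θ) (h2 : θ < -Real.pi / 2) :
    Complex.log (-Complex.exp (Complex.I * θ) /
        (Complex.I * Complex.exp (Complex.I * θ) + 1)) +
      Complex.log (Complex.I * Complex.exp (Complex.I * θ) /
        (Complex.I * Complex.exp (Complex.I * θ) + 1)) +
      Complex.log ((1 - Real.sin θ : ℝ) : ℂ) =
      -(Real.log 2 : ℂ) + Complex.I * (θ + Real.pi) := by
  have hπ := Real.pi_pos
  set X : ℝ := (θ + Real.pi/2)/2 with hX
  have hX1 : -(Real.pi/4) < X := by rw [hX]; linarith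
  have hX2 : X < 0 := by rw [hX]; linarith
  have hcosX : (0:ℝ) < Real.cos X :=
    Real.cos_pos_of_mem_Ioo ⟨by linarith, by linarith⟩
  set c : ℝ := 2 * Real.cos X with hcdef
  have hc : (0:ℝ) < c := by positivity
  -- numerator 1
  have hepi : Complex.exp (Complex.I * Real.pi) = -1 := by
    rw [mul_comm]; exact Complex.exp_pi_mul_I
  have hnum1 : -Complex.exp (Complex.I * θ) = Complex.exp (Complex.I * ((θ:ℂ) + Real.pi)) := by
    rw [show Complex.I * ((θ:ℂ) + Real.pi) = Complex.I * θ + Complex.I * Real.pi by ring,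
      Complex.exp_add, hepi]; ring
  -- numerator 2
  have hI : Complex.I = Complex.exp (Complex.I * (Real.pi/2)) := by
    rw [mul_comm, Complex.exp_mul_I,
      show ((Real.pi:ℂ))/2 = ((Real.pi/2 : ℝ) : ℂ) by push_cast; ring,
      ← Complex.ofReal_cos, ← Complex.ofReal_sin, Real.cos_pi_div_two, Real.sin_pi_div_two]
    simp
  have hnum2 : Complex.I * Complex.exp (Complex.I * θ)
      = Complex.exp (Complex.I * ((θ:ℂ) + Real.pi/2)) := by
    rw [show Complex.I * ((θ:ℂ) + Real.pi/2) = Complex.I * θ + Complex.I * (Real.pi/2) by ring,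
      Complex.exp_add, ← hI]; ring
  -- denominator
  have hs' : (Real.sin X : ℂ)^2 + (Real.cos X : ℂ)^2 = 1 := by
    exact_mod_cast congrArg (Complex.ofReal) (Real.sin_sq_add_cos_sq X)
  have key : Complex.exp ((X:ℂ) * Complex.I) * Complex.exp ((X:ℂ) * Complex.I) + 1
      = 2 * (Real.cos X : ℂ) * Complex.exp ((X:ℂ) * Complex.I) := by
    rw [Complex.exp_mul_I, ← Complex.ofReal_cos, ← Complex.ofReal_sin]
    linear_combination (Real.sin X : ℂ)^2 * Complex.I_sq - hs'
  have hw : Complex.I * Complex.exp (Complex.I * θ) + 1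
      = Complex.exp ((Real.log c : ℂ) + (X:ℝ) * Complex.I) := by
    rw [hnum2, Complex.exp_add]
    have hlc : Complex.exp ((Real.log c : ℂ)) = (c:ℂ) := by
      rw [← Complex.ofReal_exp, Real.exp_log hc]
    rw [hlc, show Complex.I * ((θ:ℂ) + Real.pi/2) = ((X:ℝ):ℂ) * Complex.I + ((X:ℝ):ℂ) * Complex.I by
      rw [hX]; push_cast; ring, Complex.exp_add, key, hcdef]
    push_cast; ring
  -- the three logs
  have hlog1 : Complex.log (-Complex.exp (Complex.I * θ) /
      (Complex.I * Complex.exp (Complex.I * θ) + 1))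
      = (-(Real.log c) : ℝ) + ((θ + Real.pi - X : ℝ)) * Complex.I := by
    rw [hnum1, hw, ← Complex.exp_sub,
      show Complex.I * ((θ:ℂ) + Real.pi) - ((Real.log c : ℂ) + (X:ℝ) * Complex.I)
        = ((-(Real.log c) : ℝ) : ℂ) + ((θ + Real.pi - X : ℝ)) * Complex.I by push_cast; ring]
    refine Complex.log_exp ?_ ?_ <;> simp <;> [linarith; linarith]
  have hlog2 : Complex.log (Complex.I * Complex.exp (Complex.I * θ) /
      (Complex.I * Complex.exp (Complex.I * θ) + 1))
      = (-(Real.log c) : ℝ) + ((θ + Real.pi/2 - X : ℝ)) * Complex.I := by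
    rw [hw, hnum2, ← Complex.exp_sub,
      show Complex.I * ((θ:ℂ) + Real.pi/2) - ((Real.log c : ℂ) + (X:ℝ) * Complex.I)
        = ((-(Real.log c) : ℝ) : ℂ) + ((θ + Real.pi/2 - X : ℝ)) * Complex.I by push_cast; ring]
    refine Complex.log_exp ?_ ?_ <;> simp <;> [linarith; linarith]
  have h1s : 1 - Real.sin θ = c^2/2 := by
    have hca : Real.cos (θ + Real.pi/2) = -Real.sin θ := by
      rw [Real.cos_add]; simp
    have hc2 : Real.cos (θ + Real.pi/2) = 2 * Real.cos X ^ 2 - 1 := by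
      rw [show θ + Real.pi/2 = 2*X by rw [hX]; ring, Real.cos_two_mul]
    rw [hcdef]; nlinarith
  have hlog3 : Complex.log (((1 - Real.sin θ : ℝ)) : ℂ)
      = ((2 * Real.log c - Real.log 2 : ℝ) : ℂ) := by
    have hl : Real.log (c^2/2) = 2 * Real.log c - Real.log 2 := by
      rw [Real.log_div (by positivity) (by norm_num), Real.log_pow]; push_cast; ring
    rw [h1s, ← Complex.ofReal_log (by positivity : (0:ℝ) ≤ c^2/2), hl]
  rw [hlog1, hlog2, hlog3]
  have hXc : ((X:ℝ) : ℂ) = ((θ:ℂ) + Real.pi/2)/2 := by rw [hX]; push_cast; ring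
  push_cast
  rw [hXc]
  ring
end
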